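/- Let G be a connected graph containing a vertex v with deg(v) ≥ 3 such that N(v) is an independent set, every vertex of N(v) has degree at least two, and G − N[v] is connected. Then G does not belong to G^cs. -/

import Mathlib

/-!
Let `R = V ∖ N[v]` and weigh every vertex of `N[v]` with `1` and every vertex of `R` with
`1 / |R|`. Then `{v} ∪ R` is a safe set of weight `2`: its components `{v}` and `R` weigh `1`, and
the components of its complement `N(v)` are single vertices of weight `1`.

A connected safe set `T` weighs more than `2`. This is clear if `T` contains two neighbours of `v`,
or `v` together with a vertex of `R` (being connected, `T` then contains a neighbour of `v` too).
Otherwise, for a single neighbour `u`, either `T ⊆ {v, u}` or `v ∉ T` and `T ⊆ {u} ∪ R`;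
so `T` weighs at most `2`, while the component of `G - T` containing two further neighbours of
`v` (and with them `R`, resp. `v`) weighs more than `2` and touches `T`.
-/

open SimpleGraph
open scoped Classical

variable {V : Type*} [Fintype V]

noncomputable def setWeight (w : V → ℝ) (A : Set V) : ℝ :=
  ∑ v : V, if v ∈ A then w v else 0

def IsComponentOf (G : SimpleGraph V) (S C : Set V) : Prop :=
  ∃ c : (G.induce S).ConnectedComponent,
    C = Subtype.val '' {x : ↥S | (G.induce S).connectedComponentMk x = c}

def Touches (G : SimpleGraph V) (C D : Set V) : Prop :=
  ∃ a ∈ C, ∃ b ∈ D, G.Adj a b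

def IsSafeSet (G : SimpleGraph V) (w : V → ℝ) (S : Set V) : Prop :=
  S.Nonempty ∧ S ≠ Set.univ ∧
    ∀ C D : Set V, IsComponentOf G S C → IsComponentOf G Sᶜ D → Touches G C D →
      setWeight w D ≤ setWeight w C

def IsConnSafeSet (G : SimpleGraph V) (w : V → ℝ) (S : Set V) : Prop :=
  IsSafeSet G w S ∧ (G.induce S).Connected

noncomputable def safeNumber (G : SimpleGraph V) (w : V → ℝ) : ℝ :=
  sInf (setWeight w '' {S | IsSafeSet G w S})

noncomputable def connSafeNumber (G : SimpleGraph V) (w : V → ℝ) : ℝ :=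
  sInf (setWeight w '' {S | IsConnSafeSet G w S})

def InGcs (G : SimpleGraph V) : Prop :=
  ∀ w : V → ℝ, (∀ v, 0 < w v) → safeNumber G w = connSafeNumber G w

section Components

variable {α : Type*} {G : SimpleGraph α} {S C : Set α}

lemma eq_of_reachable_induce_of_forall_not_adj {x y : α} (hx : x ∈ S) (hy : y ∈ S)
    (hiso : ∀ z ∈ S, ¬ G.Adj x z) (h : (G.induce S).Reachable ⟨x, hx⟩ ⟨y, hy⟩) :
    y = x := by
  by_contra hne
  obtain ⟨p⟩ := h
  obtain ⟨d, -, hd, -⟩ := p.exists_boundary_dart {⟨x, hx⟩} rfl (by simpa using hne)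
  have hadj := d.adj
  rw [Set.mem_singleton_iff.1 hd] at hadj
  exact hiso _ d.snd.2 (by simpa using hadj)

lemma exists_adj_of_induce_preconnected (hS : (G.induce S).Preconnected) {x y : α}
    (hx : x ∈ S) (hy : y ∈ S) (hne : y ≠ x) : ∃ z ∈ S, G.Adj x z := by
  by_contra! hiso
  exact hne (eq_of_reachable_induce_of_forall_not_adj hx hy hiso (hS _ _))

lemma IsComponentOf.subset (hC : IsComponentOf G S C) : C ⊆ S := by
  obtain ⟨c, rfl⟩ := hC
  rintro _ ⟨x, -, rfl⟩
  exact x.2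

lemma IsComponentOf.nonempty (hC : IsComponentOf G S C) : C.Nonempty := by
  obtain ⟨c, rfl⟩ := hC
  obtain ⟨x, rfl⟩ := c.exists_rep
  exact ⟨x, x, rfl, rfl⟩

lemma IsComponentOf.reachable (hC : IsComponentOf G S C) {a b : α} (ha : a ∈ C) (hb : b ∈ C) :
    (G.induce S).Reachable ⟨a, hC.subset ha⟩ ⟨b, hC.subset hb⟩ := by
  obtain ⟨c, rfl⟩ := hC
  obtain ⟨a, rfl : _ = c, rfl⟩ := ha
  obtain ⟨b, hbc, rfl⟩ := hb
  exact ConnectedComponent.eq.1 hbc.symm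

lemma IsComponentOf.mem_of_reachable (hC : IsComponentOf G S C) {a b : α} (ha : a ∈ C)
    (hb : b ∈ S) (h : (G.induce S).Reachable ⟨a, hC.subset ha⟩ ⟨b, hb⟩) : b ∈ C := by
  obtain ⟨c, rfl⟩ := hC
  obtain ⟨a, rfl : _ = c, rfl⟩ := ha
  exact ⟨⟨b, hb⟩, (ConnectedComponent.eq.2 h).symm, rfl⟩

lemma IsComponentOf.mem_of_adj (hC : IsComponentOf G S C) {a b : α} (ha : a ∈ C) (hb : b ∈ S)
    (hab : G.Adj a b) : b ∈ C :=
  hC.mem_of_reachable ha hb (Adj.reachable (by simpa using hab))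

lemma IsComponentOf.subset_of_preconnected (hC : IsComponentOf G S C) {K : Set α} (hKS : K ⊆ S)
    (hK : (G.induce K).Preconnected) {a : α} (haK : a ∈ K) (haC : a ∈ C) : K ⊆ C :=
  fun z hz => hC.mem_of_reachable haC (hKS hz)
    ((hK ⟨a, haK⟩ ⟨z, hz⟩).map (G.induceHomOfLE hKS).toHom)

lemma IsComponentOf.subset_singleton (hC : IsComponentOf G S C) {x : α} (hx : x ∈ C)
    (hiso : ∀ z ∈ S, ¬ G.Adj x z) : C ⊆ {x} := fun _ hy =>
  eq_of_reachable_induce_of_forall_not_adj _ _ hiso (hC.reachable hx hy)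

lemma exists_isComponentOf_mem {x : α} (hx : x ∈ S) : ∃ C, IsComponentOf G S C ∧ x ∈ C :=
  ⟨_, ⟨_, rfl⟩, ⟨x, hx⟩, rfl, rfl⟩

lemma touches_of_isComponentOf_compl (hG : G.Connected) (hS : S.Nonempty)
    (hC : IsComponentOf G Sᶜ C) : Touches G S C := by
  obtain ⟨s, hs⟩ := hS
  obtain ⟨c, hc⟩ := hC.nonempty
  obtain ⟨d, -, hd, hdC⟩ := (hG.preconnected c s).some.exists_boundary_dart C hc
    fun h => hC.subset h hs
  by_cases hdS : d.snd ∈ S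
  · exact ⟨d.snd, hdS, d.fst, hd, d.adj.symm⟩
  · exact absurd (hC.mem_of_adj hd hdS d.adj) hdC

end Components

section Weights

variable {w : V → ℝ} {A B : Set V}

lemma setWeight_eq_sum (w : V → ℝ) (A : Set V) : setWeight w A = ∑ x ∈ A.toFinset, w x := by
  rw [setWeight, ← Finset.sum_filter]
  congr 1
  ext x
  simp

lemma setWeight_mono (hw : ∀ x, 0 ≤ w x) (h : A ⊆ B) : setWeight w A ≤ setWeight w B := by
  rw [setWeight_eq_sum, setWeight_eq_sum]
  exact Finset.sum_le_sum_of_subset_of_nonneg (Set.toFinset_subset_toFinset.2 h) fun x _ _ => hw x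

lemma setWeight_pos (hw : ∀ x, 0 < w x) (hA : A.Nonempty) : 0 < setWeight w A := by
  rw [setWeight_eq_sum]
  exact Finset.sum_pos (fun x _ => hw x) (Set.toFinset_nonempty.2 hA)

lemma setWeight_insert {x : V} (hx : x ∉ A) : setWeight w (insert x A) = w x + setWeight w A := by
  rw [setWeight_eq_sum, setWeight_eq_sum, ← Finset.sum_insert (by simpa using hx)]
  congr 1
  ext
  simp

lemma setWeight_singleton (x : V) : setWeight w {x} = w x := by
  rw [setWeight_eq_sum, Set.toFinset_singleton, Finset.sum_singleton]

lemma setWeight_le_add_of_subset_insert (hw : ∀ x, 0 ≤ w x) {x : V} (h : A ⊆ insert x B) :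
    setWeight w A ≤ w x + setWeight w B := by
  refine (setWeight_mono hw h).trans ?_
  by_cases hx : x ∈ B
  · rw [Set.insert_eq_of_mem hx]
    linarith [hw x]
  · rw [setWeight_insert hx]

lemma sInf_setWeight_mem (w : V → ℝ) {P : Set V → Prop} {S : Set V} (hS : P S) :
    sInf (setWeight w '' {S | P S}) ∈ setWeight w '' {S | P S} :=
  (Set.Nonempty.image _ ⟨S, hS⟩).csInf_mem ((Set.toFinite _).image _)

lemma sInf_setWeight_le (w : V → ℝ) {P : Set V → Prop} {S : Set V} (hS : P S) :
    sInf (setWeight w '' {S | P S}) ≤ setWeight w S :=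
  csInf_le ((Set.toFinite _).image _).bddBelow ⟨S, hS, rfl⟩

end Weights

def outsideClosedNbhd {α : Type*} (G : SimpleGraph α) (v : α) : Set α :=
  (G.neighborSet v ∪ {v})ᶜ

noncomputable def starWeight {α : Type*} (G : SimpleGraph α) (v x : α) : ℝ :=
  if x ∈ outsideClosedNbhd G v then ((outsideClosedNbhd G v).ncard : ℝ)⁻¹ else 1

section OutsideClosedNbhd

variable {α : Type*} {G : SimpleGraph α} {v x : α}

lemma mem_outsideClosedNbhd : x ∈ outsideClosedNbhd G v ↔ ¬ G.Adj v x ∧ x ≠ v := by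
  simp [outsideClosedNbhd, and_comm]

lemma eq_or_adj_or_mem_outsideClosedNbhd (G : SimpleGraph α) (v x : α) :
    x = v ∨ G.Adj v x ∨ x ∈ outsideClosedNbhd G v := by
  rw [mem_outsideClosedNbhd]
  tauto

lemma compl_insert_outsideClosedNbhd : (insert v (outsideClosedNbhd G v))ᶜ = G.neighborSet v := by
  ext x
  simp only [Set.mem_compl_iff, Set.mem_insert_iff, mem_outsideClosedNbhd, mem_neighborSet]
  constructor
  · tauto
  · exact fun hx => by simp [hx, hx.ne']

lemma notMem_outsideClosedNbhd_of_adj (hx : G.Adj v x) : x ∉ outsideClosedNbhd G v :=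
  fun h => (mem_outsideClosedNbhd.1 h).1 hx

lemma self_notMem_outsideClosedNbhd : v ∉ outsideClosedNbhd G v :=
  fun h => (mem_outsideClosedNbhd.1 h).2 rfl

lemma starWeight_of_mem (hx : x ∈ outsideClosedNbhd G v) :
    starWeight G v x = ((outsideClosedNbhd G v).ncard : ℝ)⁻¹ :=
  if_pos hx

lemma starWeight_of_notMem (hx : x ∉ outsideClosedNbhd G v) : starWeight G v x = 1 :=
  if_neg hx

lemma starWeight_of_adj (hx : G.Adj v x) : starWeight G v x = 1 :=
  starWeight_of_notMem (notMem_outsideClosedNbhd_of_adj hx)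

lemma starWeight_self : starWeight G v v = 1 :=
  starWeight_of_notMem self_notMem_outsideClosedNbhd

end OutsideClosedNbhd

section StarWeight

variable {G : SimpleGraph V} {v : V}

lemma starWeight_pos (x : V) : 0 < starWeight G v x := by
  unfold starWeight
  split_ifs with hx
  · exact inv_pos.2 (Nat.cast_pos.2 (Set.ncard_pos (Set.toFinite _) |>.2 ⟨x, hx⟩))
  · exact one_pos

lemma starWeight_nonneg (G : SimpleGraph V) (v x : V) : 0 ≤ starWeight G v x :=
  (starWeight_pos x).le

lemma setWeight_starWeight_outsideClosedNbhd (hR : (outsideClosedNbhd G v).Nonempty) :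
    setWeight (starWeight G v) (outsideClosedNbhd G v) = 1 := by
  rw [setWeight_eq_sum, Finset.sum_congr rfl fun x hx => starWeight_of_mem (Set.mem_toFinset.1 hx),
    Finset.sum_const, nsmul_eq_mul, ← Set.ncard_eq_toFinset_card']
  exact mul_inv_cancel₀ (Nat.cast_ne_zero.2 (Set.ncard_pos (Set.toFinite _) |>.2 hR).ne')

lemma two_lt_setWeight_starWeight {a b x : V} {A : Set V} (ha : a ∉ outsideClosedNbhd G v)
    (hb : b ∉ outsideClosedNbhd G v) (hab : a ≠ b) (hxa : x ≠ a) (hxb : x ≠ b)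
    (h : {a, b, x} ⊆ A) : 2 < setWeight (starWeight G v) A := by
  have hpos := starWeight_pos (G := G) (v := v) x
  calc 2 < starWeight G v a + (starWeight G v b + starWeight G v x) := by
        rw [starWeight_of_notMem ha, starWeight_of_notMem hb]
        linarith
    _ = setWeight (starWeight G v) {a, b, x} := by
        rw [setWeight_insert (by simp [hab, hxa.symm]), setWeight_insert (by simpa using hxb.symm),
          setWeight_singleton]
    _ ≤ _ := setWeight_mono (starWeight_nonneg G v) h

end StarWeight

section Neighbors

variable {G : SimpleGraph V} {v : V}

lemma exists_two_neighbors_ne (hdeg : 3 ≤ G.degree v) (u : V) :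
    ∃ a b, G.Adj v a ∧ G.Adj v b ∧ a ≠ b ∧ a ≠ u ∧ b ≠ u := by
  have : 1 < ((G.neighborFinset v).erase u).card := by
    have := Finset.pred_card_le_card_erase (s := G.neighborFinset v) (a := u)
    rw [card_neighborFinset_eq_degree] at this
    omega
  obtain ⟨a, ha, b, hb, hab⟩ := Finset.one_lt_card.1 this
  simp only [Finset.mem_erase, mem_neighborFinset] at ha hb
  exact ⟨a, b, ha.2, hb.2, hab, ha.1, hb.1⟩

lemma exists_adj_mem_outsideClosedNbhd
    (hind : ∀ a ∈ G.neighborSet v, ∀ b ∈ G.neighborSet v, ¬ G.Adj a b) {u : V}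
    (hu : G.Adj v u) (hu2 : 2 ≤ G.degree u) : ∃ y ∈ outsideClosedNbhd G v, G.Adj u y := by
  have : 0 < ((G.neighborFinset u).erase v).card := by
    rw [Finset.card_erase_of_mem ((mem_neighborFinset _ _ _).2 hu.symm),
      card_neighborFinset_eq_degree]
    omega
  obtain ⟨y, hy⟩ := Finset.card_pos.1 this
  simp only [Finset.mem_erase, mem_neighborFinset] at hy
  exact ⟨y, mem_outsideClosedNbhd.2 ⟨fun hvy => hind u hu y hvy hy.2, hy.1⟩, hy.2⟩

end Neighbors

lemma IsSafeSet.setWeight_le {G : SimpleGraph V} {w : V → ℝ} {T D : Set V}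
    (hT : IsSafeSet G w T) (hw : ∀ x, 0 ≤ w x) (hD : IsComponentOf G Tᶜ D)
    (h : Touches G T D) : setWeight w D ≤ setWeight w T := by
  obtain ⟨a, haT, b, hbD, hab⟩ := h
  obtain ⟨C, hC, haC⟩ := exists_isComponentOf_mem haT
  exact (hT.2.2 C D hC hD ⟨a, haC, b, hbD, hab⟩).trans (setWeight_mono hw hC.subset)

section SafeSets

variable {G : SimpleGraph V} {v : V}

lemma isSafeSet_starWeight_insert_outsideClosedNbhd (hv : ∃ a, G.Adj v a)
    (hind : ∀ a ∈ G.neighborSet v, ∀ b ∈ G.neighborSet v, ¬ G.Adj a b)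
    (hconn : (G.induce (outsideClosedNbhd G v)).Connected) :
    IsSafeSet G (starWeight G v) (insert v (outsideClosedNbhd G v)) := by
  refine ⟨⟨v, Set.mem_insert _ _⟩, fun h => ?_, fun C D hC hD _ => ?_⟩
  · obtain ⟨a, ha⟩ := hv
    have ha' : a ∈ (insert v (outsideClosedNbhd G v))ᶜ := by
      rwa [compl_insert_outsideClosedNbhd]
    exact ha' (h ▸ Set.mem_univ a)
  rw [compl_insert_outsideClosedNbhd] at hD
  obtain ⟨d, hd⟩ := hD.nonempty
  have hDd : D ⊆ {d} := hD.subset_singleton hd fun z hz => hind d (hD.subset hd) z hz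
  obtain ⟨c, hc⟩ := hC.nonempty
  calc setWeight (starWeight G v) D
      ≤ 1 := by simpa [setWeight_singleton, starWeight_of_adj (hD.subset hd)] using
        setWeight_mono (starWeight_nonneg G v) hDd
    _ ≤ setWeight (starWeight G v) C := by
      rcases hC.subset hc with hcv | hcR
      · rw [hcv] at hc
        simpa [setWeight_singleton, starWeight_self] using
          setWeight_mono (starWeight_nonneg G v) (Set.singleton_subset_iff.2 hc)
      · rw [← setWeight_starWeight_outsideClosedNbhd ⟨c, hcR⟩]
        exact setWeight_mono (starWeight_nonneg G v)
          (hC.subset_of_preconnected (Set.subset_insert _ _) hconn.preconnected hcR hc)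

lemma not_isSafeSet_starWeight_of_subset_pair (hdeg : 3 ≤ G.degree v)
    (hind : ∀ a ∈ G.neighborSet v, ∀ b ∈ G.neighborSet v, ¬ G.Adj a b)
    (hdeg2 : ∀ a ∈ G.neighborSet v, 2 ≤ G.degree a)
    (hconn : (G.induce (outsideClosedNbhd G v)).Connected) {T : Set V} {u : V}
    (hu : G.Adj v u) (hvT : v ∈ T) (hT : T ⊆ {v, u}) : ¬ IsSafeSet G (starWeight G v) T := by
  intro hsafe
  obtain ⟨a, b, ha, hb, hab, hau, hbu⟩ := exists_two_neighbors_ne hdeg u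
  have hnotT : ∀ x, G.Adj v x → x ≠ u → x ∈ Tᶜ := fun x hx hxu hxT => by
    rcases hT hxT with rfl | rfl
    exacts [hx.ne rfl, hxu rfl]
  have hRT : outsideClosedNbhd G v ⊆ Tᶜ := fun x hx hxT => by
    rcases hT hxT with rfl | rfl
    exacts [self_notMem_outsideClosedNbhd hx, notMem_outsideClosedNbhd_of_adj hu hx]
  obtain ⟨ya, hya, haya⟩ := exists_adj_mem_outsideClosedNbhd hind ha (hdeg2 a ha)
  obtain ⟨yb, hyb, hbyb⟩ := exists_adj_mem_outsideClosedNbhd hind hb (hdeg2 b hb)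
  have haR := notMem_outsideClosedNbhd_of_adj ha
  have hbR := notMem_outsideClosedNbhd_of_adj hb
  obtain ⟨K, hK, haK⟩ := exists_isComponentOf_mem (hnotT a ha hau)
  have hyaK : ya ∈ K := hK.mem_of_adj haK (hRT hya) haya
  have hRK := hK.subset_of_preconnected hRT hconn.preconnected hya hyaK
  have hbK : b ∈ K := hK.mem_of_adj (hRK hyb) (hnotT b hb hbu) hbyb.symm
  have hK2 : 2 < setWeight (starWeight G v) K :=
    two_lt_setWeight_starWeight haR hbR hab (ne_of_mem_of_not_mem hya haR)
      (ne_of_mem_of_not_mem hya hbR) (by simp [Set.insert_subset_iff, haK, hbK, hyaK])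
  have hT2 : setWeight (starWeight G v) T ≤ 2 := by
    have := setWeight_le_add_of_subset_insert (starWeight_nonneg G v) hT
    rwa [setWeight_singleton, starWeight_self, starWeight_of_adj hu, one_add_one_eq_two] at this
  have := hsafe.setWeight_le (starWeight_nonneg G v) hK ⟨v, hvT, a, haK, ha⟩
  linarith

lemma not_isSafeSet_starWeight_of_subset_insert (hG : G.Connected) (hdeg : 3 ≤ G.degree v)
    (hR : (outsideClosedNbhd G v).Nonempty) {T : Set V} {u : V} (hu : G.Adj v u) (hvT : v ∉ T)
    (hT : T ⊆ insert u (outsideClosedNbhd G v)) : ¬ IsSafeSet G (starWeight G v) T := by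
  intro hsafe
  obtain ⟨a, b, ha, hb, hab, hau, hbu⟩ := exists_two_neighbors_ne hdeg u
  have hnotT : ∀ x, G.Adj v x → x ≠ u → x ∈ Tᶜ := fun x hx hxu hxT => by
    rcases hT hxT with rfl | hxR
    exacts [hxu rfl, notMem_outsideClosedNbhd_of_adj hx hxR]
  obtain ⟨D, hD, hvD⟩ := exists_isComponentOf_mem (show v ∈ Tᶜ from hvT)
  have hD2 : 2 < setWeight (starWeight G v) D :=
    two_lt_setWeight_starWeight (notMem_outsideClosedNbhd_of_adj ha)
      (notMem_outsideClosedNbhd_of_adj hb) hab ha.ne hb.ne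
      (by simp [Set.insert_subset_iff, hvD, hD.mem_of_adj hvD (hnotT a ha hau) ha,
        hD.mem_of_adj hvD (hnotT b hb hbu) hb])
  have hT2 : setWeight (starWeight G v) T ≤ 2 := by
    have := setWeight_le_add_of_subset_insert (starWeight_nonneg G v) hT
    rwa [setWeight_starWeight_outsideClosedNbhd hR, starWeight_of_adj hu,
      one_add_one_eq_two] at this
  have := hsafe.setWeight_le (starWeight_nonneg G v) hD
    (touches_of_isComponentOf_compl hG hsafe.1 hD)
  linarith

lemma two_lt_setWeight_of_two_neighbors_mem
    (hind : ∀ a ∈ G.neighborSet v, ∀ b ∈ G.neighborSet v, ¬ G.Adj a b) {T : Set V}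
    (hT : (G.induce T).Connected) {a b : V} (ha : G.Adj v a) (hb : G.Adj v b) (hab : a ≠ b)
    (haT : a ∈ T) (hbT : b ∈ T) : 2 < setWeight (starWeight G v) T := by
  have haR := notMem_outsideClosedNbhd_of_adj ha
  have hbR := notMem_outsideClosedNbhd_of_adj hb
  by_cases hvT : v ∈ T
  · exact two_lt_setWeight_starWeight haR hbR hab ha.ne hb.ne
      (by simp [Set.insert_subset_iff, haT, hbT, hvT])
  · obtain ⟨x, hxT, hax⟩ := exists_adj_of_induce_preconnected hT.preconnected haT hbT hab.symm
    have hxR : x ∈ outsideClosedNbhd G v :=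
      mem_outsideClosedNbhd.2 ⟨fun hvx => hind a ha x hvx hax, fun h => hvT (h ▸ hxT)⟩
    exact two_lt_setWeight_starWeight haR hbR hab (ne_of_mem_of_not_mem hxR haR)
      (ne_of_mem_of_not_mem hxR hbR) (by simp [Set.insert_subset_iff, haT, hbT, hxT])

lemma two_lt_setWeight_of_mem_outsideClosedNbhd {T : Set V} (hT : (G.induce T).Connected)
    (hvT : v ∈ T) {x : V} (hxT : x ∈ T) (hx : x ∈ outsideClosedNbhd G v) :
    2 < setWeight (starWeight G v) T := by
  have hxv : x ≠ v := ne_of_mem_of_not_mem hx self_notMem_outsideClosedNbhd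
  obtain ⟨u, huT, hu⟩ := exists_adj_of_induce_preconnected hT.preconnected hvT hxT hxv
  have huR := notMem_outsideClosedNbhd_of_adj hu
  exact two_lt_setWeight_starWeight self_notMem_outsideClosedNbhd huR hu.ne hxv
    (ne_of_mem_of_not_mem hx huR) (by simp [Set.insert_subset_iff, hvT, huT, hxT])

lemma two_lt_setWeight_of_isConnSafeSet (hG : G.Connected) (hdeg : 3 ≤ G.degree v)
    (hind : ∀ a ∈ G.neighborSet v, ∀ b ∈ G.neighborSet v, ¬ G.Adj a b)
    (hdeg2 : ∀ a ∈ G.neighborSet v, 2 ≤ G.degree a)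
    (hconn : (G.induce (outsideClosedNbhd G v)).Connected) {T : Set V}
    (hT : IsConnSafeSet G (starWeight G v) T) : 2 < setWeight (starWeight G v) T := by
  obtain ⟨hsafe, hTc⟩ := hT
  by_cases h2 : ∃ a ∈ T, ∃ b ∈ T, G.Adj v a ∧ G.Adj v b ∧ a ≠ b
  · obtain ⟨a, haT, b, hbT, ha, hb, hab⟩ := h2
    exact two_lt_setWeight_of_two_neighbors_mem hind hTc ha hb hab haT hbT
  by_cases hvR : v ∈ T ∧ ∃ x ∈ T, x ∈ outsideClosedNbhd G v
  · obtain ⟨hvT, x, hxT, hx⟩ := hvR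
    exact two_lt_setWeight_of_mem_outsideClosedNbhd hTc hvT hxT hx
  exfalso
  push Not at h2 hvR
  obtain ⟨u, hu, hTu⟩ : ∃ u, G.Adj v u ∧ ∀ x ∈ T, G.Adj v x → x = u := by
    by_cases h : ∃ x ∈ T, G.Adj v x
    · obtain ⟨x, hxT, hx⟩ := h
      exact ⟨x, hx, fun y hyT hy => h2 y hyT x hxT hy hx⟩
    · obtain ⟨a, -, ha, -⟩ := exists_two_neighbors_ne hdeg v
      exact ⟨a, ha, fun y hyT hy => absurd ⟨y, hyT, hy⟩ h⟩
  by_cases hvT : v ∈ T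
  · refine not_isSafeSet_starWeight_of_subset_pair hdeg hind hdeg2 hconn hu hvT
      (fun x hxT => ?_) hsafe
    rcases eq_or_adj_or_mem_outsideClosedNbhd G v x with rfl | hx | hxR
    exacts [Or.inl rfl, Or.inr (hTu x hxT hx), absurd hxR (hvR hvT x hxT)]
  · refine not_isSafeSet_starWeight_of_subset_insert hG hdeg
      (Set.nonempty_coe_sort.1 hconn.nonempty) hu hvT (fun x hxT => ?_) hsafe
    rcases eq_or_adj_or_mem_outsideClosedNbhd G v x with rfl | hx | hxR
    exacts [absurd hxT hvT, Or.inl (hTu x hxT hx), Or.inr hxR]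

end SafeSets

theorem stmt_12 (G : SimpleGraph V) (hG : G.Connected) (v : V)
    (hdeg : 3 ≤ G.degree v)
    (hind : ∀ a ∈ G.neighborSet v, ∀ b ∈ G.neighborSet v, ¬ G.Adj a b)
    (hdeg2 : ∀ a ∈ G.neighborSet v, 2 ≤ G.degree a)
    (hconn : (G.induce ((G.neighborSet v ∪ {v})ᶜ : Set V)).Connected) :
    ¬ InGcs G := by
  intro hIn
  have hR : (outsideClosedNbhd G v).Nonempty := Set.nonempty_coe_sort.1 hconn.nonempty
  have hS₀ := isSafeSet_starWeight_insert_outsideClosedNbhd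
    (G.degree_pos_iff_exists_adj v |>.1 (by omega)) hind hconn
  have hle : safeNumber G (starWeight G v) ≤ 2 := by
    refine (sInf_setWeight_le _ hS₀).trans_eq ?_
    rw [setWeight_insert self_notMem_outsideClosedNbhd, starWeight_self,
      setWeight_starWeight_outsideClosedNbhd hR, one_add_one_eq_two]
  have hpos : 0 < safeNumber G (starWeight G v) := by
    obtain ⟨S, hS, hSeq⟩ := sInf_setWeight_mem (starWeight G v) hS₀
    rw [safeNumber, ← hSeq]
    exact setWeight_pos starWeight_pos hS.1
  rw [hIn _ starWeight_pos, connSafeNumber] at hle hpos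
  by_cases hc : ∃ T, IsConnSafeSet G (starWeight G v) T
  · obtain ⟨T, hT⟩ := hc
    obtain ⟨T', hT', hT'eq⟩ := sInf_setWeight_mem (starWeight G v) hT
    have := two_lt_setWeight_of_isConnSafeSet hG hdeg hind hdeg2 hconn hT'
    linarith
  · have hempty : {T | IsConnSafeSet G (starWeight G v) T} = ∅ :=
      Set.eq_empty_of_forall_notMem fun T hT => hc ⟨T, hT⟩
    rw [hempty, Set.image_empty, Real.sInf_empty] at hpos
    exact hpos.false
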